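/- arXiv:2310.03774 — 2 statements merged into one kernel-verified Lean document; each statement's English description precedes it below -/
import Mathlib

section
/- Let f : ℝ → ℝⁿ be continuous with f(s) = 0 for all s < 0, let x_0 ∈ ℝⁿ, define x(t) = exp(tΛ)·x_0 + ∫₀ᵗ exp((t−s)Λ)·f(s−τ) ds for t ≥ 0, and define the transformed function y(t) = x(t) + ∫_{t−τ}^{t} exp((t−s−τ)Λ)·f(s) ds. Then y(0) = exp(−τΛ)·x(τ), and y is differentiable on [0,∞) with y′(t) = Λ·y(t) + exp(−τΛ)·f(t) for every t ≥ 0. -/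
/-!
Since `exp((t - s)Λ) = exp(tΛ) exp(-sΛ)`, the variation-of-constants formula reads
`exp(tΛ) (x₀ + ∫₀ᵗ exp(-sΛ) g s ds)`, and the product rule shows it solves `ẋ = Λx + g`.
After the substitution `s ↦ s - τ` the integral in `x t` runs over `[-τ, t - τ]`; the correction
term of `y` extends it to `[-τ, t]`, and as `f` vanishes on `(-∞, 0]` what remains is the
variation-of-constants formula with forcing `exp(-τΛ) f`. Both claims follow, using
`y 0 = x₀` and `x τ = exp(τΛ) x₀`.
-/

open Matrix MeasureTheory
open scoped Matrix

noncomputable section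

/-- The matrix exponential of a real `n × n` matrix. -/
def mexp {n : ℕ} (A : Matrix (Fin n) (Fin n) ℝ) : Matrix (Fin n) (Fin n) ℝ :=
  NormedSpace.exp A

theorem HasDerivAt.matrix_mulVec {𝕜 m ι : Type*} [NontriviallyNormedField 𝕜] [CompleteSpace 𝕜]
    [Fintype m] [Fintype ι] {A : 𝕜 → Matrix m ι 𝕜} {v : 𝕜 → ι → 𝕜} {A' : Matrix m ι 𝕜} {v' : ι → 𝕜}
    {t : 𝕜} (hA : HasDerivAt A A' t) (hv : HasDerivAt v v' t) :
    HasDerivAt (fun u => A u *ᵥ v u) (A t *ᵥ v' + A' *ᵥ v t) t := by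
  let := Matrix.normedAddCommGroup (m := m) (n := ι) (α := 𝕜)
  let := Matrix.normedSpace (m := m) (n := ι) (α := 𝕜) (R := 𝕜)
  exact (mulVecBilin 𝕜 𝕜).toContinuousBilinearMap.hasDerivAt_of_bilinear (fun _ => hA)
    (fun _ => hv)

theorem Matrix.mulVec_intervalIntegral {𝕜 m ι : Type*} [RCLike 𝕜] [Fintype m] [Fintype ι]
    (M : Matrix m ι 𝕜) {g : ℝ → ι → 𝕜} {a b : ℝ} (hg : IntervalIntegrable g volume a b) :
    ∫ s in a..b, M *ᵥ g s = M *ᵥ ∫ s in a..b, g s :=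
  M.mulVecLin.toContinuousLinearMap.intervalIntegral_comp_comm hg

theorem Continuous.forall_le_eq_zero_of_forall_lt {E : Type*} [TopologicalSpace E] [T2Space E]
    [Zero E] {f : ℝ → E} (hf : Continuous f) {a : ℝ} (h : ∀ s < a, f s = 0) : ∀ s ≤ a, f s = 0 := by
  have : Set.EqOn f 0 (closure (Set.Iio a)) := Set.EqOn.closure h hf continuous_const
  exact fun s hs => this (by rwa [closure_Iio])

section MatrixExponential

variable {n : ℕ}

theorem mexp_zero : mexp (0 : Matrix (Fin n) (Fin n) ℝ) = 1 :=
  NormedSpace.exp_zero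

theorem mexp_add_smul (Λ : Matrix (Fin n) (Fin n) ℝ) (a b : ℝ) :
    mexp ((a + b) • Λ) = mexp (a • Λ) * mexp (b • Λ) := by
  rw [add_smul]
  exact Matrix.exp_add_of_commute _ _ (((Commute.refl Λ).smul_left a).smul_right b)

theorem mexp_smul_mul_mexp_neg_smul (Λ : Matrix (Fin n) (Fin n) ℝ) (a : ℝ) :
    mexp (a • Λ) * mexp ((-a) • Λ) = 1 := by
  rw [← mexp_add_smul, add_neg_cancel, zero_smul, mexp_zero]

theorem mexp_neg_smul_mul_mexp_smul (Λ : Matrix (Fin n) (Fin n) ℝ) (a : ℝ) :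
    mexp ((-a) • Λ) * mexp (a • Λ) = 1 := by
  rw [← mexp_add_smul, neg_add_cancel, zero_smul, mexp_zero]

theorem hasDerivAt_mexp_smul (Λ : Matrix (Fin n) (Fin n) ℝ) (t : ℝ) :
    HasDerivAt (fun u : ℝ => mexp (u • Λ)) (Λ * mexp (t • Λ)) t := by
  -- any normed algebra structure inducing the product topology will do
  let := Matrix.linftyOpNormedRing (n := Fin n) (α := ℝ)
  let := Matrix.linftyOpNormedAlgebra (n := Fin n) (α := ℝ) (R := ℝ)
  exact hasDerivAt_exp_smul_const' Λ t

theorem continuous_mexp_smul (Λ : Matrix (Fin n) (Fin n) ℝ) :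
    Continuous fun u : ℝ => mexp (u • Λ) := by
  let := Matrix.linftyOpNormedRing (n := Fin n) (α := ℝ)
  let := Matrix.linftyOpNormedAlgebra (n := Fin n) (α := ℝ) (R := ℝ)
  exact continuous_iff_continuousAt.2 fun t => (hasDerivAt_mexp_smul Λ t).continuousAt

def variationOfConstants (Λ : Matrix (Fin n) (Fin n) ℝ) (x₀ : Fin n → ℝ) (g : ℝ → Fin n → ℝ)
    (t : ℝ) : Fin n → ℝ :=
  mexp (t • Λ) *ᵥ x₀ + ∫ s in (0 : ℝ)..t, mexp ((t - s) • Λ) *ᵥ g s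

variable (Λ : Matrix (Fin n) (Fin n) ℝ) (x₀ : Fin n → ℝ) {g : ℝ → Fin n → ℝ}

theorem variationOfConstants_zero : variationOfConstants Λ x₀ g 0 = x₀ := by
  simp [variationOfConstants, mexp_zero]

theorem variationOfConstants_of_eqOn_zero {t : ℝ} (hg : Set.EqOn g 0 (Set.uIcc 0 t)) :
    variationOfConstants Λ x₀ g t = mexp (t • Λ) *ᵥ x₀ := by
  have hint : ∫ s in (0 : ℝ)..t, mexp ((t - s) • Λ) *ᵥ g s = 0 :=
    (intervalIntegral.integral_congr fun s hs => by simp [hg hs]).trans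
      intervalIntegral.integral_zero
  rw [variationOfConstants, hint, add_zero]

theorem variationOfConstants_eq_mexp_mulVec (hg : Continuous g) (t : ℝ) :
    variationOfConstants Λ x₀ g t =
      mexp (t • Λ) *ᵥ (x₀ + ∫ s in (0 : ℝ)..t, mexp ((-s) • Λ) *ᵥ g s) := by
  have hcont : Continuous fun s => mexp ((-s) • Λ) *ᵥ g s :=
    ((continuous_mexp_smul Λ).comp continuous_neg).matrix_mulVec hg
  rw [mulVec_add, ← mulVec_intervalIntegral _ (hcont.intervalIntegrable 0 t),
    variationOfConstants]
  congr 1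
  refine intervalIntegral.integral_congr fun s _ => ?_
  simp only [mulVec_mulVec, ← mexp_add_smul, sub_eq_add_neg]

theorem hasDerivAt_variationOfConstants (hg : Continuous g) (t : ℝ) :
    HasDerivAt (variationOfConstants Λ x₀ g) (Λ *ᵥ variationOfConstants Λ x₀ g t + g t) t := by
  have hcont : Continuous fun s => mexp ((-s) • Λ) *ᵥ g s :=
    ((continuous_mexp_smul Λ).comp continuous_neg).matrix_mulVec hg
  have hc := (hcont.integral_hasStrictDerivAt 0 t).hasDerivAt.const_add x₀
  rw [funext (variationOfConstants_eq_mexp_mulVec Λ x₀ hg)]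
  convert (hasDerivAt_mexp_smul Λ t).matrix_mulVec hc using 1
  rw [mulVec_mulVec, mulVec_mulVec, mexp_smul_mul_mexp_neg_smul, one_mulVec, add_comm]

theorem variationOfConstants_delay_add_integral {τ : ℝ} (hτ : 0 ≤ τ) {f : ℝ → Fin n → ℝ}
    (hf : Continuous f) (hf0 : ∀ s ≤ 0, f s = 0) (t : ℝ) :
    variationOfConstants Λ x₀ (fun s => f (s - τ)) t +
        ∫ s in (t - τ)..t, mexp ((t - s - τ) • Λ) *ᵥ f s =
      variationOfConstants Λ x₀ (fun s => mexp ((-τ) • Λ) *ᵥ f s) t := by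
  set G : ℝ → Fin n → ℝ := fun s => mexp ((t - s - τ) • Λ) *ᵥ f s
  have hG : ∀ a b, IntervalIntegrable G volume a b := fun a b =>
    (((continuous_mexp_smul Λ).comp (by fun_prop)).matrix_mulVec hf).intervalIntegrable a b
  have shift : ∫ s in (0 : ℝ)..t, mexp ((t - s) • Λ) *ᵥ f (s - τ) = ∫ s in (-τ)..(t - τ), G s := by
    rw [← zero_sub, ← intervalIntegral.integral_comp_sub_right G τ]
    simp only [G, sub_sub, sub_add_cancel]
  have vanish : ∫ s in (-τ)..0, G s = 0 :=
    (intervalIntegral.integral_congr fun s hs => by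
      rw [Set.uIcc_of_le (neg_nonpos.2 hτ)] at hs
      simp [G, hf0 s hs.2]).trans
      intervalIntegral.integral_zero
  have factor : ∫ s in (0 : ℝ)..t, G s =
      ∫ s in (0 : ℝ)..t, mexp ((t - s) • Λ) *ᵥ mexp ((-τ) • Λ) *ᵥ f s :=
    intervalIntegral.integral_congr fun s _ => by
      simp only [G, mulVec_mulVec, ← mexp_add_smul, sub_eq_add_neg]
  rw [variationOfConstants, variationOfConstants, add_assoc, shift,
    intervalIntegral.integral_add_adjacent_intervals (hG _ _) (hG _ _),
    ← intervalIntegral.integral_add_adjacent_intervals (hG _ 0) (hG 0 _), vanish, zero_add, factor]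

end MatrixExponential

/-- Let `f : ℝ → ℝⁿ` be continuous with `f s = 0` for `s < 0`, let
`x t = exp(tΛ)·x₀ + ∫₀ᵗ exp((t−s)Λ)·f(s−τ) ds` for `t ≥ 0`, and let
`y t = x t + ∫_{t−τ}^{t} exp((t−s−τ)Λ)·f s ds`. Then `y 0 = exp(−τΛ)·x(τ)` and `y` is
differentiable on `[0,∞)` with `y′(t) = Λ·y(t) + exp(−τΛ)·f(t)` for every `t ≥ 0`. -/
theorem statement_2 {n : ℕ} (Λ : Matrix (Fin n) (Fin n) ℝ) (τ : ℝ) (hτ : 0 ≤ τ)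
    (f : ℝ → Fin n → ℝ) (hf : Continuous f)
    (hf0 : ∀ s < 0, f s = 0) (x0 : Fin n → ℝ) (x y : ℝ → Fin n → ℝ)
    (hx : ∀ t, 0 ≤ t → x t = (mexp (t • Λ)).mulVec x0 +
      ∫ s in (0:ℝ)..t, (mexp ((t - s) • Λ)).mulVec (f (s - τ)))
    (hy : ∀ t, 0 ≤ t → y t = x t +
      ∫ s in (t - τ)..t, (mexp ((t - s - τ) • Λ)).mulVec (f s)) :
    y 0 = (mexp ((-τ) • Λ)).mulVec (x τ) ∧
      ∀ t, 0 ≤ t →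
        HasDerivWithinAt y (Λ.mulVec (y t) + (mexp ((-τ) • Λ)).mulVec (f t))
          (Set.Ici (0:ℝ)) t := by
  have hf_nonpos := hf.forall_le_eq_zero_of_forall_lt hf0
  have hy_eq : ∀ t, 0 ≤ t →
      y t = variationOfConstants Λ x0 (fun s => mexp ((-τ) • Λ) *ᵥ f s) t := fun t ht => by
    rw [hy t ht, hx t ht]
    exact variationOfConstants_delay_add_integral Λ x0 hτ hf hf_nonpos t
  have hxτ : x τ = mexp (τ • Λ) *ᵥ x0 := by
    rw [hx τ hτ]
    refine variationOfConstants_of_eqOn_zero Λ x0 fun s hs => hf_nonpos _ ?_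
    rw [Set.uIcc_of_le hτ] at hs
    linarith [hs.2]
  refine ⟨?_, fun t ht => ?_⟩
  · rw [hy_eq 0 le_rfl, variationOfConstants_zero, hxτ, mulVec_mulVec,
      mexp_neg_smul_mul_mexp_smul, one_mulVec]
  · rw [hy_eq t ht]
    exact (hasDerivAt_variationOfConstants Λ x0
      (continuous_const.matrix_mulVec hf) t).hasDerivWithinAt.congr hy_eq (hy_eq t ht)
end
end

section
/- Let u* = (u*_1,…,u*_n) be an admissible control profile of the delay-free game with trajectory y* = y_{u*} from y_0 ∈ ℝⁿ. If for every player i and almost every t ∈ [0,T] one has u*_i(t) = −(1/(r_i·d_i))·B̂_iᵀ·exp((T−t)Λᵀ)·L̂_i·y*(T), then u* is an open-loop Nash equilibrium of the delay-free game. -/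
open Matrix MeasureTheory
open scoped Matrix

noncomputable section

/-- An admissible control of the delayed game: a bounded measurable function `u : ℝ → ℝ`
with `u s = 0` for `s < 0`. -/
def AdmissibleD (u : ℝ → ℝ) : Prop :=
  Measurable u ∧ (∃ C, ∀ s, |u s| ≤ C) ∧ ∀ s < 0, u s = 0

/-- An admissible control of the delay-free game: a bounded measurable function. -/
def AdmissibleF (u : ℝ → ℝ) : Prop :=
  Measurable u ∧ ∃ C, ∀ s, |u s| ≤ C

/-- Data of the differential games of opinion formation: the system matrix `Λ`
(the continuous-time Hegselmann–Krause matrix `Λ = D⁻¹A − I`), the input delay `τ`,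
the terminal time `tf`, and for each player `i` the input vector `B i`, the control
weight `r i`, the neighborhood size `d i = |𝒩ᵢ|`, the agent-`i` graph Laplacian `L i`
and the stubbornness coefficient `ω i`. -/
structure GameData (n : ℕ) where
  Λ : Matrix (Fin n) (Fin n) ℝ
  τ : ℝ
  tf : ℝ
  B : Fin n → Fin n → ℝ
  r : Fin n → ℝ
  d : Fin n → ℝ
  L : Fin n → Matrix (Fin n) (Fin n) ℝ
  ω : Fin n → ℝ

namespace GameData

variable {n : ℕ} (G : GameData n)

/-- The standing hypotheses: `τ ≥ 0`, `t_f > τ`, `rᵢ > 0`, `dᵢ > 0`, each `Lᵢ` symmetric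
positive semidefinite, and `ωᵢ ∈ [0,1]`. -/
def Valid : Prop :=
  0 ≤ G.τ ∧ G.τ < G.tf ∧ (∀ i, 0 < G.r i) ∧ (∀ i, 0 < G.d i) ∧
    (∀ i, (G.L i).PosSemidef) ∧ ∀ i, G.ω i ∈ Set.Icc (0 : ℝ) 1

/-- `T = t_f − τ`. -/
def T : ℝ := G.tf - G.τ

/-- `B̂ᵢ = exp(−τΛ)·Bᵢ`. -/
def Bhat (i : Fin n) : Fin n → ℝ := (mexp ((-G.τ) • G.Λ)).mulVec (G.B i)

/-- `L̂ᵢ = exp(τΛᵀ)·Lᵢ·exp(τΛ)`. -/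
def Lhat (i : Fin n) : Matrix (Fin n) (Fin n) ℝ :=
  mexp (G.τ • G.Λᵀ) * G.L i * mexp (G.τ • G.Λ)

/-- `Sᵢ = (1/rᵢ)·B̂ᵢ·B̂ᵢᵀ`. -/
def S (i : Fin n) : Matrix (Fin n) (Fin n) ℝ :=
  (1 / G.r i) • vecMulVec (G.Bhat i) (G.Bhat i)

/-- The matrix `∫₀ᵗ exp((t−s)Λ)·Sᵢ·exp((T−s)Λᵀ) ds` (entrywise integral). -/
def Phi (T' : ℝ) (i : Fin n) (t : ℝ) : Matrix (Fin n) (Fin n) ℝ :=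
  Matrix.of fun a b =>
    ∫ s in (0:ℝ)..t, (mexp ((t - s) • G.Λ) * G.S i * mexp ((T' - s) • G.Λᵀ)) a b

/-- `Ψᵢ = ∫₀ᵀ exp((T−s)Λ)·Sᵢ·exp((T−s)Λᵀ) ds` with `T = t_f − τ`. -/
def Psi (i : Fin n) : Matrix (Fin n) (Fin n) ℝ := G.Phi G.T i G.T

/-- `H = I + ∑ⱼ (1/dⱼ)·Ψⱼ·L̂ⱼ`. -/
def H : Matrix (Fin n) (Fin n) ℝ :=
  1 + ∑ j : Fin n, (1 / G.d j) • (G.Psi j * G.Lhat j)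

/-- `Wᵢ`: the matrix whose `(i,i)` entry is `ωᵢ` and all other entries are `0`. -/
def W (i : Fin n) : Matrix (Fin n) (Fin n) ℝ := Matrix.single i i (G.ω i)

/-- `Ŵᵢ = exp(τΛᵀ)·Wᵢ·exp(τΛ)`. -/
def What (i : Fin n) : Matrix (Fin n) (Fin n) ℝ :=
  mexp (G.τ • G.Λᵀ) * G.W i * mexp (G.τ • G.Λ)

/-- `Ĥ = I + ∑ⱼ Ψⱼ·(Ŵⱼ + ((1−ωⱼ)/dⱼ)·L̂ⱼ)`. -/
def Hhat : Matrix (Fin n) (Fin n) ℝ :=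
  1 + ∑ j : Fin n, G.Psi j * (G.What j + ((1 - G.ω j) / G.d j) • G.Lhat j)

/-- The trajectory of the delayed game:
`x_u(t) = exp(tΛ)·x₀ + ∫₀ᵗ exp((t−s)Λ)·(∑ⱼ Bⱼ·uⱼ(s−τ)) ds`. -/
def xtraj (x0 : Fin n → ℝ) (u : Fin n → ℝ → ℝ) (t : ℝ) : Fin n → ℝ :=
  (mexp (t • G.Λ)).mulVec x0 +
    ∫ s in (0:ℝ)..t, (mexp ((t - s) • G.Λ)).mulVec (∑ j : Fin n, u j (s - G.τ) • G.B j)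

/-- The trajectory of the delay-free game:
`y_u(t) = exp(tΛ)·y₀ + ∫₀ᵗ exp((t−s)Λ)·(∑ⱼ B̂ⱼ·uⱼ(s)) ds`. -/
def ytraj (y0 : Fin n → ℝ) (u : Fin n → ℝ → ℝ) (t : ℝ) : Fin n → ℝ :=
  (mexp (t • G.Λ)).mulVec y0 +
    ∫ s in (0:ℝ)..t, (mexp ((t - s) • G.Λ)).mulVec (∑ j : Fin n, u j s • G.Bhat j)

/-- Player `i`'s cost in the delayed game:
`Jᵢ(u) = (1/dᵢ)·x_u(t_f)ᵀ·Lᵢ·x_u(t_f) + ∫₀^{t_f} rᵢ·uᵢ(t−τ)² dt`. -/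
def J (x0 : Fin n → ℝ) (i : Fin n) (u : Fin n → ℝ → ℝ) : ℝ :=
  (1 / G.d i) * (G.xtraj x0 u G.tf ⬝ᵥ (G.L i).mulVec (G.xtraj x0 u G.tf)) +
    ∫ t in (0:ℝ)..G.tf, G.r i * u i (t - G.τ) ^ 2

/-- Player `i`'s cost in the delay-free game:
`Ĵᵢ(u) = (1/dᵢ)·y_u(T)ᵀ·L̂ᵢ·y_u(T) + ∫₀ᵀ rᵢ·uᵢ(t)² dt`. -/
def JF (y0 : Fin n → ℝ) (i : Fin n) (u : Fin n → ℝ → ℝ) : ℝ :=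
  (1 / G.d i) * (G.ytraj y0 u G.T ⬝ᵥ (G.Lhat i).mulVec (G.ytraj y0 u G.T)) +
    ∫ t in (0:ℝ)..G.T, G.r i * u i t ^ 2

/-- Player `i`'s stubborn cost in the delayed game. -/
def Jstub (x0 : Fin n → ℝ) (i : Fin n) (u : Fin n → ℝ → ℝ) : ℝ :=
  (G.xtraj x0 u G.tf - x0) ⬝ᵥ (G.W i).mulVec (G.xtraj x0 u G.tf - x0) +
    ((1 - G.ω i) / G.d i) * (G.xtraj x0 u G.tf ⬝ᵥ (G.L i).mulVec (G.xtraj x0 u G.tf)) +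
    ∫ t in (0:ℝ)..G.tf, G.r i * u i (t - G.τ) ^ 2

/-- Player `i`'s stubborn cost in the delay-free game, with reference opinion `x₀`. -/
def JstubF (x0 y0 : Fin n → ℝ) (i : Fin n) (u : Fin n → ℝ → ℝ) : ℝ :=
  ((mexp (G.τ • G.Λ)).mulVec (G.ytraj y0 u G.T) - x0) ⬝ᵥ
      (G.W i).mulVec ((mexp (G.τ • G.Λ)).mulVec (G.ytraj y0 u G.T) - x0) +
    ((1 - G.ω i) / G.d i) * (G.ytraj y0 u G.T ⬝ᵥ (G.Lhat i).mulVec (G.ytraj y0 u G.T)) +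
    ∫ t in (0:ℝ)..G.T, G.r i * u i t ^ 2

/-- Open-loop Nash equilibrium of the delayed game. -/
def NashD (x0 : Fin n → ℝ) (u : Fin n → ℝ → ℝ) : Prop :=
  (∀ i, AdmissibleD (u i)) ∧
    ∀ i, ∀ v : ℝ → ℝ, AdmissibleD v →
      G.J x0 i u ≤ G.J x0 i (Function.update u i v)

/-- Open-loop Nash equilibrium of the delay-free game. -/
def NashF (y0 : Fin n → ℝ) (u : Fin n → ℝ → ℝ) : Prop :=
  (∀ i, AdmissibleF (u i)) ∧
    ∀ i, ∀ v : ℝ → ℝ, AdmissibleF v →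
      G.JF y0 i u ≤ G.JF y0 i (Function.update u i v)

/-- Open-loop Nash equilibrium of the stubborn delayed game. -/
def NashStubD (x0 : Fin n → ℝ) (u : Fin n → ℝ → ℝ) : Prop :=
  (∀ i, AdmissibleD (u i)) ∧
    ∀ i, ∀ v : ℝ → ℝ, AdmissibleD v →
      G.Jstub x0 i u ≤ G.Jstub x0 i (Function.update u i v)

/-- Open-loop Nash equilibrium of the stubborn delay-free game. -/
def NashStubF (x0 y0 : Fin n → ℝ) (u : Fin n → ℝ → ℝ) : Prop :=
  (∀ i, AdmissibleF (u i)) ∧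
    ∀ i, ∀ v : ℝ → ℝ, AdmissibleF v →
      G.JstubF x0 y0 i u ≤ G.JstubF x0 y0 i (Function.update u i v)

end GameData

/-!
Fix a player `i` and a deviation `v`. The terminal state moves by `δ = ∫ (v - uᵢ) • β`, where
`β(s) = exp((T-s)Λ) B̂ᵢ`, which is linear in `v - uᵢ`. Since `L̂ᵢ` is positive semidefinite, the
terminal cost grows by at least `(2/dᵢ) (L̂ᵢ y*(T)) ⬝ δ`; by convexity of `x ↦ rᵢ x²` the control
cost grows by at least `2 ∫ rᵢ uᵢ (v - uᵢ)`. The optimality condition makes these two first-order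
terms cancel.
-/

section MatrixExp

attribute [local instance] Matrix.linftyOpNormedRing Matrix.linftyOpNormedAlgebra

theorem continuous_mexp_sub_smul {n : ℕ} (A : Matrix (Fin n) (Fin n) ℝ) (t : ℝ) :
    Continuous fun s : ℝ => mexp ((t - s) • A) :=
  NormedSpace.exp_continuous.comp ((continuous_const.sub continuous_id).smul continuous_const)

end MatrixExp

theorem mexp_smul_transpose {n : ℕ} (c : ℝ) (A : Matrix (Fin n) (Fin n) ℝ) :
    mexp (c • Aᵀ) = (mexp (c • A))ᵀ := by
  rw [← Matrix.transpose_smul]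
  exact Matrix.exp_transpose _

theorem Matrix.PosSemidef.le_dotProduct_mulVec_add {n : ℕ} {L : Matrix (Fin n) (Fin n) ℝ}
    (hL : L.PosSemidef) (y δ : Fin n → ℝ) :
    y ⬝ᵥ L *ᵥ y + 2 * (L *ᵥ y ⬝ᵥ δ) ≤ (y + δ) ⬝ᵥ L *ᵥ (y + δ) := by
  have hcross : y ⬝ᵥ L *ᵥ δ = δ ⬝ᵥ L *ᵥ y := by
    rw [← Matrix.dotProduct_transpose_mulVec, ← Matrix.conjTranspose_eq_transpose_of_trivial,
      hL.isHermitian.eq]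
  have hδ : 0 ≤ δ ⬝ᵥ L *ᵥ δ := by simpa using hL.dotProduct_mulVec_nonneg δ
  rw [Matrix.mulVec_add, add_dotProduct, dotProduct_add, dotProduct_add, hcross,
    dotProduct_comm δ (L *ᵥ y)]
  linarith

theorem dotProduct_intervalIntegral {n : ℕ} (p : Fin n → ℝ) {f : ℝ → Fin n → ℝ} {a b : ℝ}
    (hf : IntervalIntegrable f volume a b) :
    p ⬝ᵥ ∫ s in a..b, f s = ∫ s in a..b, p ⬝ᵥ f s :=
  ((LinearMap.toContinuousLinearMap (dotProductBilin ℝ ℝ p)).intervalIntegral_comp_comm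
    hf).symm

namespace AdmissibleF

theorem const (c : ℝ) : AdmissibleF fun _ => c := ⟨measurable_const, |c|, fun _ => le_rfl⟩

theorem sub {u v : ℝ → ℝ} (hu : AdmissibleF u) (hv : AdmissibleF v) :
    AdmissibleF fun s => u s - v s := by
  obtain ⟨hum, Cu, hCu⟩ := hu
  obtain ⟨hvm, Cv, hCv⟩ := hv
  exact ⟨hum.sub hvm, Cu + Cv, fun s => (abs_sub _ _).trans (add_le_add (hCu s) (hCv s))⟩

theorem mul {u v : ℝ → ℝ} (hu : AdmissibleF u) (hv : AdmissibleF v) :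
    AdmissibleF fun s => u s * v s := by
  obtain ⟨hum, Cu, hCu⟩ := hu
  obtain ⟨hvm, Cv, hCv⟩ := hv
  refine ⟨hum.mul hvm, Cu * Cv, fun s => ?_⟩
  rw [abs_mul]
  exact mul_le_mul (hCu s) (hCv s) (abs_nonneg _) ((abs_nonneg _).trans (hCu s))

theorem integrableOn {u : ℝ → ℝ} (hu : AdmissibleF u) {K : Set ℝ} (hK : IsCompact K) :
    IntegrableOn u K := by
  obtain ⟨hum, C, hC⟩ := hu
  exact IntegrableOn.of_bound hK.measure_lt_top hum.aestronglyMeasurable C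
    (Filter.Eventually.of_forall hC)

theorem intervalIntegrable_smul {E : Type*} [NormedAddCommGroup E] [NormedSpace ℝ E]
    {u : ℝ → ℝ} (hu : AdmissibleF u) {g : ℝ → E} (hg : Continuous g) (a b : ℝ) :
    IntervalIntegrable (fun s => u s • g s) volume a b :=
  ((hu.integrableOn isCompact_uIcc).smul_continuousOn hg.continuousOn
    isCompact_uIcc).intervalIntegrable

theorem intervalIntegrable {u : ℝ → ℝ} (hu : AdmissibleF u) (a b : ℝ) :
    IntervalIntegrable u volume a b := by
  simpa using hu.intervalIntegrable_smul continuous_const (g := fun _ => (1 : ℝ)) a b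

theorem integral_mul_sq_add_le {u v : ℝ → ℝ} (hu : AdmissibleF u)
    (hv : AdmissibleF v) {r a b : ℝ} (hr : 0 ≤ r) (hab : a ≤ b) :
    (∫ t in a..b, r * u t ^ 2) + 2 * ∫ t in a..b, r * u t * (v t - u t)
      ≤ ∫ t in a..b, r * v t ^ 2 := by
  have hru : AdmissibleF fun t => r * u t := (const r).mul hu
  have hru2 : AdmissibleF fun t => r * u t ^ 2 := by simpa only [sq, mul_assoc] using hru.mul hu
  have hrv2 : AdmissibleF fun t => r * v t ^ 2 := by
    simpa only [sq, mul_assoc] using ((const r).mul hv).mul hv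
  have hcross : AdmissibleF fun t => r * u t * (v t - u t) := hru.mul (hv.sub hu)
  rw [← intervalIntegral.integral_const_mul,
    ← intervalIntegral.integral_add (hru2.intervalIntegrable a b)
      ((hcross.intervalIntegrable a b).const_mul 2)]
  refine intervalIntegral.integral_mono_on hab
    ((hru2.intervalIntegrable a b).add ((hcross.intervalIntegrable a b).const_mul 2))
    (hrv2.intervalIntegrable a b) fun t _ => ?_
  nlinarith [mul_nonneg hr (sq_nonneg (v t - u t))]

end AdmissibleF

namespace GameData

variable {n : ℕ} (G : GameData n)

theorem Lhat_posSemidef {i : Fin n} (hL : (G.L i).PosSemidef) : (G.Lhat i).PosSemidef := by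
  have h := hL.conjTranspose_mul_mul_same (mexp (G.τ • G.Λ))
  rwa [Matrix.conjTranspose_eq_transpose_of_trivial, ← mexp_smul_transpose] at h

theorem sum_update_smul_Bhat (u : Fin n → ℝ → ℝ) (i : Fin n) (v : ℝ → ℝ) (s : ℝ) :
    ∑ j, Function.update u i v j s • G.Bhat j
      = ∑ j, u j s • G.Bhat j + (v s - u i s) • G.Bhat i := by
  have hsplit : ∀ j,
      Function.update u i v j s = u j s + (Pi.single i (v s - u i s) : Fin n → ℝ) j := by
    intro j
    rcases eq_or_ne j i with rfl | hj <;> simp [*]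
  simp [hsplit, add_smul, Finset.sum_add_distrib, Pi.single_apply, ite_smul]

theorem intervalIntegrable_ytraj_integrand {u : Fin n → ℝ → ℝ} (hu : ∀ j, AdmissibleF (u j))
    (t : ℝ) :
    IntervalIntegrable (fun s => mexp ((t - s) • G.Λ) *ᵥ ∑ j, u j s • G.Bhat j) volume 0 t := by
  simp_rw [Matrix.mulVec_sum, Matrix.mulVec_smul]
  simpa only [Finset.sum_fn] using IntervalIntegrable.sum Finset.univ fun j _ =>
    (hu j).intervalIntegrable_smul
      ((continuous_mexp_sub_smul G.Λ t).matrix_mulVec (continuous_const (y := G.Bhat j))) 0 t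

theorem ytraj_update (y0 : Fin n → ℝ) {u : Fin n → ℝ → ℝ} (hu : ∀ j, AdmissibleF (u j))
    (i : Fin n) {v : ℝ → ℝ} (hv : AdmissibleF v) (t : ℝ) :
    G.ytraj y0 (Function.update u i v) t
      = G.ytraj y0 u t + ∫ s in 0..t, (v s - u i s) • mexp ((t - s) • G.Λ) *ᵥ G.Bhat i := by
  have hdev : IntervalIntegrable (fun s => (v s - u i s) • mexp ((t - s) • G.Λ) *ᵥ G.Bhat i)
      volume 0 t :=
    (hv.sub (hu i)).intervalIntegrable_smul
      ((continuous_mexp_sub_smul G.Λ t).matrix_mulVec continuous_const) 0 t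
  simp only [ytraj, sum_update_smul_Bhat, Matrix.mulVec_add, Matrix.mulVec_smul]
  rw [add_assoc, ← intervalIntegral.integral_add (G.intervalIntegrable_ytraj_integrand hu t) hdev]

theorem JF_le_JF_update (y0 : Fin n → ℝ) {u : Fin n → ℝ → ℝ} (hu : ∀ j, AdmissibleF (u j))
    {i : Fin n} (hT : 0 ≤ G.T) (hr : 0 < G.r i) (hd : 0 < G.d i) (hL : (G.L i).PosSemidef)
    (hopt : ∀ᵐ t ∂(volume.restrict (Set.Icc (0:ℝ) G.T)),
      u i t = -(1 / (G.r i * G.d i)) *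
        (G.Bhat i ⬝ᵥ (mexp ((G.T - t) • G.Λᵀ)).mulVec ((G.Lhat i).mulVec (G.ytraj y0 u G.T))))
    {v : ℝ → ℝ} (hv : AdmissibleF v) :
    G.JF y0 i u ≤ G.JF y0 i (Function.update u i v) := by
  set y := G.ytraj y0 u G.T
  set p := G.Lhat i *ᵥ y
  set β : ℝ → Fin n → ℝ := fun s => mexp ((G.T - s) • G.Λ) *ᵥ G.Bhat i
  set δ := ∫ s in 0..G.T, (v s - u i s) • β s
  have hdev : IntervalIntegrable (fun s => (v s - u i s) • β s) volume 0 G.T :=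
    (hv.sub (hu i)).intervalIntegrable_smul
      ((continuous_mexp_sub_smul G.Λ G.T).matrix_mulVec continuous_const) 0 G.T
  have hpδ : p ⬝ᵥ δ = ∫ s in 0..G.T, (v s - u i s) * (p ⬝ᵥ β s) := by
    simp only [δ, dotProduct_intervalIntegral p hdev, dotProduct_smul, smul_eq_mul]
  have hcostate : ∫ t in 0..G.T, G.r i * u i t * (v t - u i t)
      = -(1 / G.d i) * ∫ s in 0..G.T, (v s - u i s) * (p ⬝ᵥ β s) := by
    rw [← intervalIntegral.integral_const_mul]
    refine intervalIntegral.integral_congr_ae ?_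
    filter_upwards [(ae_restrict_iff' measurableSet_Icc).mp hopt] with t ht hmem
    rw [Set.uIoc_of_le hT] at hmem
    rw [ht (Set.Ioc_subset_Icc_self hmem), mexp_smul_transpose,
      Matrix.dotProduct_transpose_mulVec]
    field_simp
    ring
  have hterminal := (G.Lhat_posSemidef hL).le_dotProduct_mulVec_add y δ
  have hcontrol := (hu i).integral_mul_sq_add_le hv hr.le hT
  have hscale := mul_le_mul_of_nonneg_left hterminal (one_div_nonneg.mpr hd.le)
  simp only [JF, G.ytraj_update y0 hu i hv, Function.update_self]
  rw [hpδ] at hscale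
  rw [hcostate] at hcontrol
  linarith

end GameData

/-- Sufficiency of the Pontryagin condition: if an admissible profile `u` of the delay-free
game with trajectory `y* = y_u` from `y₀` satisfies, for every player `i` and almost every
`t ∈ [0,T]`, `uᵢ(t) = −(1/(rᵢdᵢ))·B̂ᵢᵀ·exp((T−t)Λᵀ)·L̂ᵢ·y*(T)`, then `u` is an open-loop
Nash equilibrium of the delay-free game. -/
theorem statement_8 {n : ℕ} (G : GameData n) (hG : G.Valid) (y0 : Fin n → ℝ)
    (u : Fin n → ℝ → ℝ) (hu : ∀ i, AdmissibleF (u i))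
    (hopt : ∀ i, ∀ᵐ t ∂(volume.restrict (Set.Icc (0:ℝ) G.T)),
      u i t = -(1 / (G.r i * G.d i)) *
        (G.Bhat i ⬝ᵥ (mexp ((G.T - t) • G.Λᵀ)).mulVec
          ((G.Lhat i).mulVec (G.ytraj y0 u G.T)))) :
    G.NashF y0 u := by
  obtain ⟨-, hτ, hr, hd, hL, -⟩ := hG
  have hT : 0 ≤ G.T := sub_nonneg.mpr hτ.le
  exact ⟨hu, fun i _ hv => G.JF_le_JF_update y0 hu hT (hr i) (hd i) (hL i) (hopt i) hv⟩
end
end
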